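/- (Case 4, deletion form) Under the layered-network construction, let a and b be two distinct user nodes in M, and let S ⊆ V \ {a, b} be any set of vertices with |S| ≤ k − 1. Then a and b are connected in the subgraph of G induced on V \ S. -/

import Mathlib

/-!
Some center avoids `S`: the centers are pairwise disjoint and there are `k` of them, while `S` has
fewer than `k` vertices. That center is a clique of surviving vertices, and `a` and `b` are attached
to it, so `a – c_i(a) – c_i(b) – b` is a path avoiding `S`.
-/

open Function in
theorem Finset.exists_disjoint_of_card_lt {ι V : Type*} [Fintype ι] {C : ι → Finset V}
    (hC : Pairwise (Disjoint on C)) {S : Finset V} (hS : S.card < Fintype.card ι) :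
    ∃ i, Disjoint (C i) S := by
  by_contra! hmeet
  choose f hf using fun i => Finset.not_disjoint_iff.mp (hmeet i)
  have hinj : Function.Injective f := fun i j hij => by
    by_contra hne
    exact Finset.disjoint_left.mp (hC hne) (hf i).1 (hij ▸ (hf j).1)
  have : Fintype.card ι ≤ S.card :=
    Finset.card_le_card_of_injOn (s := Finset.univ) f (fun i _ => (hf i).2) hinj.injOn
  omega

theorem SimpleGraph.induce_reachable_of_adj_isClique {V : Type*} {G : SimpleGraph V}
    {s K : Set V} (hK : G.IsClique K) (hKs : K ⊆ s) {x y u v : V} (hx : x ∈ s) (hy : y ∈ s)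
    (hu : u ∈ K) (hv : v ∈ K) (hxu : G.Adj x u) (hvy : G.Adj v y) :
    (G.induce s).Reachable ⟨x, hx⟩ ⟨y, hy⟩ := by
  have huv : (G.induce s).Reachable ⟨u, hKs hu⟩ ⟨v, hKs hv⟩ := by
    by_cases h : u = v
    · subst h; rfl
    · exact SimpleGraph.Adj.reachable (hK hu hv h)
  have hxu' : (G.induce s).Adj ⟨x, hx⟩ ⟨u, hKs hu⟩ := hxu
  have hvy' : (G.induce s).Adj ⟨v, hKs hv⟩ ⟨y, hy⟩ := hvy
  exact hxu'.reachable.trans (huv.trans hvy'.reachable)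

theorem layered_network_two_users_delete_vertices_general
    {V : Type}
    (k : ℕ) (hk : 1 ≤ k)
    (C : Fin k → Finset V) (M : Finset V)
    (hCC : ∀ i j : Fin k, i ≠ j → Disjoint (C i) (C j))
    (c : V → Fin k → V)
    (hc : ∀ v ∈ M, ∀ i : Fin k, c v i ∈ C i)
    (G : SimpleGraph V)
    (hAdj : ∀ x y : V, G.Adj x y ↔
      ((x ≠ y ∧ ∃ i : Fin k, x ∈ C i ∧ y ∈ C i) ∨
        (∃ v ∈ M, ∃ i : Fin k, (x = v ∧ y = c v i) ∨ (y = v ∧ x = c v i))))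
    (a b : V) (ha : a ∈ M) (hb : b ∈ M)
    (S : Finset V) (hScard : S.card ≤ k - 1)
    (haS : a ∉ S) (hbS : b ∉ S) :
    (G.induce {v : V | v ∉ S}).Reachable ⟨a, haS⟩ ⟨b, hbS⟩ := by
  obtain ⟨i, hi⟩ := Finset.exists_disjoint_of_card_lt hCC
    (show S.card < Fintype.card (Fin k) by rw [Fintype.card_fin]; omega)
  have hclique : G.IsClique (C i : Set V) := fun x hx y hy hne =>
    (hAdj x y).2 (Or.inl ⟨hne, i, hx, hy⟩)
  have hattach : ∀ v ∈ M, G.Adj v (c v i) := fun v hv =>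
    (hAdj _ _).2 (Or.inr ⟨v, hv, i, Or.inl ⟨rfl, rfl⟩⟩)
  exact SimpleGraph.induce_reachable_of_adj_isClique hclique
    (fun x hx => Finset.disjoint_left.mp hi hx) haS hbS (hc a ha i) (hc b hb i)
    (hattach a ha) (hattach b hb).symm

/-- Case 4, deletion form: two distinct user nodes `a, b ∈ M` remain
connected after deleting any set `S ⊆ V \ {a, b}` of at most `k - 1` vertices. -/
theorem layered_network_two_users_delete_vertices
    {V : Type} [Fintype V] [DecidableEq V]
    (k : ℕ) (hk : 1 ≤ k)
    (C : Fin k → Finset V) (M : Finset V)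
    (hCcard : ∀ i : Fin k, (C i).card = k + 1)
    (hMcard : k ≤ M.card)
    (hCC : ∀ i j : Fin k, i ≠ j → Disjoint (C i) (C j))
    (hCM : ∀ i : Fin k, Disjoint (C i) M)
    (hcover : ∀ v : V, v ∈ M ∨ ∃ i : Fin k, v ∈ C i)
    (c : V → Fin k → V)
    (hc : ∀ v ∈ M, ∀ i : Fin k, c v i ∈ C i)
    (G : SimpleGraph V)
    (hAdj : ∀ x y : V, G.Adj x y ↔
      ((x ≠ y ∧ ∃ i : Fin k, x ∈ C i ∧ y ∈ C i) ∨
        (∃ v ∈ M, ∃ i : Fin k, (x = v ∧ y = c v i) ∨ (y = v ∧ x = c v i))))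
    (a b : V) (ha : a ∈ M) (hb : b ∈ M) (hab : a ≠ b)
    (S : Finset V) (hScard : S.card ≤ k - 1)
    (haS : a ∉ S) (hbS : b ∉ S) :
    (G.induce {v : V | v ∉ S}).Reachable ⟨a, haS⟩ ⟨b, hbS⟩ :=
  layered_network_two_users_delete_vertices_general k hk C M hCC c hc G hAdj a b ha hb S hScard haS
    hbS
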